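/- arXiv:2510.04297 — 2 statements merged into one kernel-verified Lean document; each statement's English description precedes it below -/
import Mathlib

section
/- An n×n quaternion matrix T is Toeplitz if and only if there exist vectors p, ψ ∈ ℍⁿ such that T - Γ T Γ* = p ⊗ e₀ + e₀ ⊗ ψ, where e₀ is the first standard basis vector and (x ⊗ y) denotes the rank-one matrix with (i,j) entry x_i · conj(y_j). -/
noncomputable def shiftMat (n : ℕ) : Matrix (Fin n) (Fin n) (Quaternion ℝ) :=
  Matrix.of fun i j => if (i : ℕ) = (j : ℕ) + 1 then 1 else 0

def IsToeplitz {n : ℕ} (T : Matrix (Fin n) (Fin n) (Quaternion ℝ)) : Prop :=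
  ∀ (i j : Fin n) (hi : (i : ℕ) + 1 < n) (hj : (j : ℕ) + 1 < n),
    T ⟨(i : ℕ) + 1, hi⟩ ⟨(j : ℕ) + 1, hj⟩ = T i j

/-- rank-one tensor product: (x ⊗ y)_{ij} = x_i * conj (y_j). -/
noncomputable def tensor {n : ℕ} (x y : Fin n → Quaternion ℝ) : Matrix (Fin n) (Fin n) (Quaternion ℝ) :=
  Matrix.of fun i j => x i * star (y j)

lemma shiftMul_apply {n : ℕ} (T : Matrix (Fin n) (Fin n) (Quaternion ℝ))
    (i : Fin n) (hi : (i : ℕ) + 1 < n) (b : Fin n) :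
    (shiftMat n * T) ⟨(i : ℕ) + 1, hi⟩ b = T i b := by
  rw [Matrix.mul_apply, Finset.sum_eq_single i]
  · simp [shiftMat]
  · intro l _ hl
    have : ¬ ((i : ℕ) + 1 = (l : ℕ) + 1) := by
      simp only [Nat.add_right_cancel_iff]
      exact fun h => hl (Fin.ext h.symm)
    simp [shiftMat, this]
    intro h; exact absurd (Fin.ext h.symm) hl
  · intro h; exact absurd (Finset.mem_univ i) h

lemma mulShiftT_apply {n : ℕ} (A : Matrix (Fin n) (Fin n) (Quaternion ℝ))
    (j : Fin n) (hj : (j : ℕ) + 1 < n) (a : Fin n) :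
    (A * (shiftMat n).transpose) a ⟨(j : ℕ) + 1, hj⟩ = A a j := by
  rw [Matrix.mul_apply, Finset.sum_eq_single j]
  · simp [shiftMat, Matrix.transpose_apply]
  · intro l _ hl
    have : ¬ ((j : ℕ) + 1 = (l : ℕ) + 1) := by
      simp only [Nat.add_right_cancel_iff]
      exact fun h => hl (Fin.ext h.symm)
    simp [shiftMat, Matrix.transpose_apply, this]
    intro h; exact absurd (Fin.ext h.symm) hl
  · intro h; exact absurd (Finset.mem_univ j) h

lemma shift_entry_succ {n : ℕ} (T : Matrix (Fin n) (Fin n) (Quaternion ℝ))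
    (i j : Fin n) (hi : (i : ℕ) + 1 < n) (hj : (j : ℕ) + 1 < n) :
    (shiftMat n * T * (shiftMat n).transpose) ⟨(i : ℕ) + 1, hi⟩ ⟨(j : ℕ) + 1, hj⟩ = T i j := by
  rw [mulShiftT_apply, shiftMul_apply]

lemma shift_entry_row0 {n : ℕ} (T : Matrix (Fin n) (Fin n) (Quaternion ℝ))
    (a b : Fin n) (ha : (a : ℕ) = 0) :
    (shiftMat n * T * (shiftMat n).transpose) a b = 0 := by
  rw [Matrix.mul_assoc, Matrix.mul_apply]
  apply Finset.sum_eq_zero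
  intro l _
  have : ¬ ((a : ℕ) = (l : ℕ) + 1) := by omega
  simp [shiftMat, this]

lemma shift_entry_col0 {n : ℕ} (T : Matrix (Fin n) (Fin n) (Quaternion ℝ))
    (a b : Fin n) (hb : (b : ℕ) = 0) :
    (shiftMat n * T * (shiftMat n).transpose) a b = 0 := by
  rw [Matrix.mul_apply]
  apply Finset.sum_eq_zero
  intro l _
  have : ¬ ((b : ℕ) = (l : ℕ) + 1) := by omega
  simp [shiftMat, Matrix.transpose_apply, this]

theorem toeplitz_iff_rank_two (n : ℕ) [NeZero n] (T : Matrix (Fin n) (Fin n) (Quaternion ℝ)) :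
    IsToeplitz T ↔
      ∃ p ψ : Fin n → Quaternion ℝ,
        T - shiftMat n * T * (shiftMat n).transpose =
          tensor p (Pi.single 0 1) + tensor (Pi.single 0 1) ψ := by
  constructor
  · intro hT
    refine ⟨fun i => T i 0, fun j => if j = 0 then 0 else star (T 0 j), ?_⟩
    refine Matrix.ext fun i j => ?_
    simp only [Matrix.sub_apply, Matrix.add_apply, tensor, Matrix.of_apply]
    by_cases hi0 : (i : ℕ) = 0
    · have hieq : i = 0 := Fin.ext (by simpa using hi0)
      rw [shift_entry_row0 T i j hi0]
      by_cases hj0 : j = 0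
      · subst hj0 hieq
        simp [Pi.single_apply]
      · subst hieq
        simp [Pi.single_apply, hj0]
    · by_cases hj0 : (j : ℕ) = 0
      · have hjeq : j = 0 := Fin.ext (by simpa using hj0)
        rw [shift_entry_col0 T i j hj0]
        subst hjeq
        have hine : i ≠ 0 := fun h => hi0 (by simp [h])
        simp [Pi.single_apply, hine]
      · -- both positive
        obtain ⟨i', hi'⟩ : ∃ i' : ℕ, (i : ℕ) = i' + 1 := ⟨(i : ℕ) - 1, by omega⟩
        obtain ⟨j', hj'⟩ : ∃ j' : ℕ, (j : ℕ) = j' + 1 := ⟨(j : ℕ) - 1, by omega⟩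
        have hi'n : i' + 1 < n := by have := i.isLt; omega
        have hj'n : j' + 1 < n := by have := j.isLt; omega
        have hieq : i = ⟨i' + 1, hi'n⟩ := Fin.ext hi'
        have hjeq : j = ⟨j' + 1, hj'n⟩ := Fin.ext hj'
        have hin : i ≠ 0 := fun h => hi0 (by simp [h])
        have hjn : j ≠ 0 := fun h => hj0 (by simp [h])
        rw [hieq, hjeq]
        have key := shift_entry_succ T ⟨i', by omega⟩ ⟨j', by omega⟩ hi'n hj'n
        rw [key]
        have hTeq := hT ⟨i', by omega⟩ ⟨j', by omega⟩ hi'n hj'n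
        rw [hTeq]
        have h1 : (⟨i' + 1, hi'n⟩ : Fin n) ≠ 0 := by
          intro h; exact absurd (congrArg Fin.val h) (by simp)
        have h2 : (⟨j' + 1, hj'n⟩ : Fin n) ≠ 0 := by
          intro h; exact absurd (congrArg Fin.val h) (by simp)
        simp [Pi.single_apply, h1, h2]
  · rintro ⟨p, ψ, h⟩
    intro i j hi hj
    have := congrFun (congrFun h ⟨(i : ℕ) + 1, hi⟩) ⟨(j : ℕ) + 1, hj⟩
    simp only [Matrix.sub_apply, Matrix.add_apply, tensor, Matrix.of_apply] at this
    have h1 : (⟨(i : ℕ) + 1, hi⟩ : Fin n) ≠ 0 := by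
      intro h; exact absurd (congrArg Fin.val h) (by simp)
    have h2 : (⟨(j : ℕ) + 1, hj⟩ : Fin n) ≠ 0 := by
      intro h; exact absurd (congrArg Fin.val h) (by simp)
    rw [shift_entry_succ T i j hi hj] at this
    simp [Pi.single_apply, h1, h2] at this
    exact sub_eq_zero.mp this
end

section
/- With T, U, V, W quaternion Toeplitz matrices as above (real diagonals) and assuming TU - VW is Toeplitz, one has TU - VW = 0 if and only if Tq + q₀p + p₀q₀e₀ = Vs + s₀r + r₀s₀e₀ and U*ψ + p₀φ + p₀q₀e₀ = W*λ + r₀μ + r₀s₀e₀. -/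
/-- The Toeplitz matrix with strictly lower part from `p` and strictly
upper part from conjugates of `ψ`, zero diagonal. -/
noncomputable def Tmat {n : ℕ} (p ψ : Fin n → Quaternion ℝ) :
    Matrix (Fin n) (Fin n) (Quaternion ℝ) :=
  Matrix.of fun i j =>
    if (j : ℕ) < (i : ℕ) then
      p ⟨(i : ℕ) - (j : ℕ), lt_of_le_of_lt (Nat.sub_le _ _) i.isLt⟩
    else if (i : ℕ) < (j : ℕ) then
      star (ψ ⟨(j : ℕ) - (i : ℕ), lt_of_le_of_lt (Nat.sub_le _ _) j.isLt⟩)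
    else 0

lemma Tmat_col0 {n : ℕ} [NeZero n] (a b : Fin n → Quaternion ℝ) (ha : a 0 = 0) (i : Fin n) :
    Tmat a b i 0 = a i := by
  unfold Tmat
  simp only [Matrix.of_apply, Fin.val_zero]
  rcases Nat.eq_zero_or_pos i.val with h | h
  · have : i = 0 := by ext; simp [h]
    simp [this, ha]
  · simp only [h, ↓reduceIte]
    congr 1

lemma Tmat_conjT {n : ℕ} (a b : Fin n → Quaternion ℝ) :
    (Tmat a b).conjTranspose = Tmat b a := by
  refine Matrix.ext fun i j => ?_
  simp only [Matrix.conjTranspose_apply, Tmat, Matrix.of_apply]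
  rcases lt_trichotomy (i : ℕ) (j : ℕ) with h | h | h
  · simp [h, Nat.lt_asymm h]
  · simp [h, lt_irrefl]
  · simp [h, Nat.lt_asymm h]

lemma toeplitz_zero {n : ℕ} [NeZero n] (M : Matrix (Fin n) (Fin n) (Quaternion ℝ))
    (h : IsToeplitz M) (hc : ∀ i, M i 0 = 0) (hr : ∀ j, M 0 j = 0) : M = 0 := by
  refine Matrix.ext fun i j => ?_
  have key : ∀ k (i j : Fin n), (i : ℕ) ≤ k → M i j = 0 := by
    intro k
    induction k with
    | zero =>
      intro i j hi
      have : i = 0 := by ext; simpa using hi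
      rw [this]; exact hr j
    | succ k ih =>
      intro i j hi
      obtain ⟨iv, hiv⟩ := i
      obtain ⟨jv, hjv⟩ := j
      match iv, jv with
      | 0, jv => exact hr ⟨jv, hjv⟩
      | iv + 1, 0 => exact hc ⟨iv + 1, hiv⟩
      | iv + 1, jv + 1 =>
        rw [h ⟨iv, by omega⟩ ⟨jv, by omega⟩ hiv hjv]
        exact ih ⟨iv, by omega⟩ ⟨jv, by omega⟩ (by simpa using Nat.lt_succ_iff.mp hi)
  simpa using key (i : ℕ) i j le_rfl

lemma mulVec_e0 {n : ℕ} [NeZero n] (a b : Fin n → Quaternion ℝ) (a₀ : ℝ) (ha : a 0 = 0) :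
    (Tmat a b + a₀ • (1 : Matrix (Fin n) (Fin n) (Quaternion ℝ))).mulVec (Pi.single 0 1) =
      a + a₀ • (Pi.single 0 1 : Fin n → Quaternion ℝ) := by
  funext i
  have h1 : ∀ (A : Matrix (Fin n) (Fin n) (Quaternion ℝ)),
      A.mulVec (Pi.single 0 1) i = A i 0 := by
    intro A; simp [Matrix.mulVec_single]
  rw [h1]
  simp [Matrix.add_apply, Tmat_col0 a b ha, Matrix.smul_apply, Matrix.one_apply,
    Pi.single_apply, eq_comm]

lemma smul_one_conjT {n : ℕ} (c : ℝ) :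
    (c • (1 : Matrix (Fin n) (Fin n) (Quaternion ℝ))).conjTranspose = c • 1 := by
  refine Matrix.ext fun i j => ?_
  simp [Matrix.conjTranspose_apply, Matrix.one_apply, eq_comm, apply_ite (star ·)]

theorem product_difference_zero_iff (n : ℕ) [NeZero n]
    (p ψ q φ r lam s μ : Fin n → Quaternion ℝ) (p₀ q₀ r₀ s₀ : ℝ)
    (hp : p 0 = 0) (hψ : ψ 0 = 0) (hq : q 0 = 0) (hφ : φ 0 = 0)
    (hr : r 0 = 0) (hlam : lam 0 = 0) (hs : s 0 = 0) (hμ : μ 0 = 0)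
    (T U V W : Matrix (Fin n) (Fin n) (Quaternion ℝ))
    (hT : T = Tmat p ψ + p₀ • 1) (hU : U = Tmat q φ + q₀ • 1)
    (hV : V = Tmat r lam + r₀ • 1) (hW : W = Tmat s μ + s₀ • 1)
    (htoep : IsToeplitz (T * U - V * W)) :
    T * U - V * W = 0 ↔
      (T.mulVec q + q₀ • p + (p₀ * q₀) • (Pi.single 0 1 : Fin n → Quaternion ℝ) =
        V.mulVec s + s₀ • r + (r₀ * s₀) • (Pi.single 0 1 : Fin n → Quaternion ℝ)) ∧
      (U.conjTranspose.mulVec ψ + p₀ • φ +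
          (p₀ * q₀) • (Pi.single 0 1 : Fin n → Quaternion ℝ) =
        W.conjTranspose.mulVec lam + r₀ • μ +
          (r₀ * s₀) • (Pi.single 0 1 : Fin n → Quaternion ℝ)) := by
  set e : Fin n → Quaternion ℝ := Pi.single 0 1 with he
  set M : Matrix (Fin n) (Fin n) (Quaternion ℝ) := T * U - V * W with hM
  have hTe : T.mulVec e = p + p₀ • e := by rw [hT]; exact mulVec_e0 p ψ p₀ hp
  have hUe : U.mulVec e = q + q₀ • e := by rw [hU]; exact mulVec_e0 q φ q₀ hq
  have hVe : V.mulVec e = r + r₀ • e := by rw [hV]; exact mulVec_e0 r lam r₀ hr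
  have hWe : W.mulVec e = s + s₀ • e := by rw [hW]; exact mulVec_e0 s μ s₀ hs
  have hTc : T.conjTranspose = Tmat ψ p + p₀ • 1 := by
    rw [hT]
    simp [Matrix.conjTranspose_add, Tmat_conjT, smul_one_conjT]
  have hUc : U.conjTranspose = Tmat φ q + q₀ • 1 := by
    rw [hU]
    simp [Matrix.conjTranspose_add, Tmat_conjT, smul_one_conjT]
  have hVc : V.conjTranspose = Tmat lam r + r₀ • 1 := by
    rw [hV]
    simp [Matrix.conjTranspose_add, Tmat_conjT, smul_one_conjT]
  have hWc : W.conjTranspose = Tmat μ s + s₀ • 1 := by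
    rw [hW]
    simp [Matrix.conjTranspose_add, Tmat_conjT, smul_one_conjT]
  have hTce : T.conjTranspose.mulVec e = ψ + p₀ • e := by
    rw [hTc]; exact mulVec_e0 ψ p p₀ hψ
  have hUce : U.conjTranspose.mulVec e = φ + q₀ • e := by
    rw [hUc]; exact mulVec_e0 φ q q₀ hφ
  have hVce : V.conjTranspose.mulVec e = lam + r₀ • e := by
    rw [hVc]; exact mulVec_e0 lam r r₀ hlam
  have hWce : W.conjTranspose.mulVec e = μ + s₀ • e := by
    rw [hWc]; exact mulVec_e0 μ s s₀ hμ
  have hcol : M.mulVec e =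
      (T.mulVec q + q₀ • p + (p₀ * q₀) • e) - (V.mulVec s + s₀ • r + (r₀ * s₀) • e) := by
    rw [hM, Matrix.sub_mulVec, ← Matrix.mulVec_mulVec, ← Matrix.mulVec_mulVec, hUe, hWe,
      Matrix.mulVec_add, Matrix.mulVec_add, Matrix.mulVec_smul, Matrix.mulVec_smul, hTe, hVe]
    module
  have hMc : M.conjTranspose =
      U.conjTranspose * T.conjTranspose - W.conjTranspose * V.conjTranspose := by
    rw [hM]
    simp [Matrix.conjTranspose_sub, Matrix.conjTranspose_mul]
  have hrow : M.conjTranspose.mulVec e =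
      (U.conjTranspose.mulVec ψ + p₀ • φ + (p₀ * q₀) • e) -
        (W.conjTranspose.mulVec lam + r₀ • μ + (r₀ * s₀) • e) := by
    rw [hMc, Matrix.sub_mulVec, ← Matrix.mulVec_mulVec, ← Matrix.mulVec_mulVec, hTce, hVce,
      Matrix.mulVec_add, Matrix.mulVec_add, Matrix.mulVec_smul, Matrix.mulVec_smul, hUce, hWce]
    module
  constructor
  · intro h0
    constructor
    · have h1 : M.mulVec e = 0 := by rw [h0]; simp [Matrix.zero_mulVec]
      rw [hcol] at h1
      exact sub_eq_zero.mp h1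
    · have h1 : M.conjTranspose.mulVec e = 0 := by
        rw [h0]; simp [Matrix.zero_mulVec]
      rw [hrow] at h1
      exact sub_eq_zero.mp h1
  · rintro ⟨h1, h2⟩
    apply toeplitz_zero M htoep
    · intro i
      have hz : M.mulVec e = 0 := by rw [hcol, h1]; simp
      have := congrFun hz i
      simpa [he, Matrix.mulVec_single] using this
    · intro j
      have hz : M.conjTranspose.mulVec e = 0 := by rw [hrow, h2]; simp
      have := congrFun hz j
      simpa [he, Matrix.mulVec_single, Matrix.conjTranspose_apply] using this
end
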